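/- Let γ¹ be the madogram of a family Z : X → Ω → ℝ of random variables. Then for every positive integer n and all points x₁,…,xₙ ∈ X: (i) γ¹ satisfies the negative-type inequalities: for all reals λ₁,…,λₙ with ∑ₖ λₖ = 0, ∑ₖ∑ₗ λₖ λₗ γ¹(xₖ,xₗ) ≤ 0; and (ii) γ¹ satisfies the hypermetric inequalities: for all integers λ₁,…,λₙ ∈ ℤ with ∑ₖ λₖ = 1, ∑ₖ∑ₗ λₖ λₗ γ¹(xₖ,xₗ) ≤ 0. -/

import Mathlib

/-!
Both families of inequalities hold pointwise in `ω` for the kernel `|a - b|` on `ℝ`, and integrate.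
On `ℝ`, `|a - b| = ∫ (𝟙[t < a] - 𝟙[t < b])² dt` writes the kernel as a mixture of cut semimetrics
`(u k - u l)²` with `u` a `0/1`-vector. For these,
`∑ₖ∑ₗ λₖ λₗ (uₖ - uₗ)² = 2 (∑ λ)(∑ λ u) - 2 (∑ λ u)²`, which is `-2 (∑ λ u)² ≤ 0` when `∑ λ = 0`,
and `-2 m (m - 1) ≤ 0` with `m = ∑ λ u ∈ ℤ` when `λ` is integral with `∑ λ = 1`.
-/

open MeasureTheory Finset

section

variable {ι : Type*} [Fintype ι]

theorem sum_sum_mul_mul_sub_sq (lam u : ι → ℝ) :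
    ∑ k, ∑ l, lam k * lam l * (u k - u l) ^ 2
      = 2 * (∑ k, lam k) * (∑ k, lam k * u k ^ 2) - 2 * (∑ k, lam k * u k) ^ 2 := by
  have hterm : ∀ k l, lam k * lam l * (u k - u l) ^ 2
      = lam k * (lam l * u l ^ 2) + lam l * (lam k * u k ^ 2) - 2 * (lam k * u k) * (lam l * u l) :=
    fun k l => by ring
  simp only [hterm, sum_add_distrib, sum_sub_distrib, ← mul_sum, ← sum_mul, sq (∑ k, lam k * u k)]
  ring

theorem sum_sum_mul_integral_nonpos {Ω : Type*} [MeasurableSpace Ω] (μ : Measure Ω)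
    (c : ι → ι → ℝ) (f : ι → ι → Ω → ℝ) (hf : ∀ k l, Integrable (f k l) μ)
    (h : ∀ ω, ∑ k, ∑ l, c k l * f k l ω ≤ 0) :
    ∑ k, ∑ l, c k l * ∫ ω, f k l ω ∂μ ≤ 0 := by
  have hcf : ∀ k l, Integrable (fun ω => c k l * f k l ω) μ := fun k l => (hf k l).const_mul _
  simp_rw [← integral_const_mul]
  simp_rw [← integral_finsetSum _ fun l _ => hcf _ l]
  rw [← integral_finsetSum _ fun k _ => integrable_finsetSum _ fun l _ => hcf k l]
  exact integral_nonpos h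

theorem sq_ite_lt_sub_ite_lt (a b t : ℝ) :
    ((if t < a then 1 else 0) - (if t < b then 1 else 0) : ℝ) ^ 2
      = (Set.Ico (min a b) (max a b)).indicator 1 t := by
  by_cases ha : t < a <;> by_cases hb : t < b <;>
    simp [ha, hb, not_lt.1]

theorem integral_sq_ite_lt_sub_ite_lt (a b : ℝ) :
    ∫ t, ((if t < a then 1 else 0) - (if t < b then 1 else 0) : ℝ) ^ 2 = |a - b| := by
  simp_rw [sq_ite_lt_sub_ite_lt]
  rw [integral_indicator_one measurableSet_Ico, Real.volume_real_Ico_of_le min_le_max,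
    max_sub_min_eq_abs']

theorem integrable_sq_ite_lt_sub_ite_lt (a b : ℝ) :
    Integrable (fun t => ((if t < a then 1 else 0) - (if t < b then 1 else 0) : ℝ) ^ 2) := by
  simp_rw [sq_ite_lt_sub_ite_lt]
  exact (integrable_indicator_iff measurableSet_Ico).2 (integrableOn_const measure_Ico_lt_top.ne)

theorem sum_sum_mul_abs_sub_nonpos_of_cut (a lam : ι → ℝ)
    (hcut : ∀ u : ι → ℝ, (∀ k, u k = 0 ∨ u k = 1) →
      ∑ k, ∑ l, lam k * lam l * (u k - u l) ^ 2 ≤ 0) :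
    ∑ k, ∑ l, lam k * lam l * |a k - a l| ≤ 0 := by
  simp_rw [← integral_sq_ite_lt_sub_ite_lt]
  refine sum_sum_mul_integral_nonpos _ _ _ (fun k l => integrable_sq_ite_lt_sub_ite_lt _ _)
    fun t => hcut _ fun k => ?_
  split_ifs <;> simp

theorem sum_sum_mul_abs_sub_nonpos_of_sum_eq_zero (a lam : ι → ℝ) (hsum : ∑ k, lam k = 0) :
    ∑ k, ∑ l, lam k * lam l * |a k - a l| ≤ 0 := by
  refine sum_sum_mul_abs_sub_nonpos_of_cut a lam fun u _ => ?_
  rw [sum_sum_mul_mul_sub_sq, hsum]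
  nlinarith [sq_nonneg (∑ k, lam k * u k)]

theorem Int.mul_sub_one_nonneg (m : ℤ) : 0 ≤ m * (m - 1) := by
  rcases le_or_gt m 0 with hm | hm <;> nlinarith

theorem sum_sum_mul_abs_sub_nonpos_of_sum_eq_one (a : ι → ℝ) (lam : ι → ℤ)
    (hsum : ∑ k, lam k = 1) :
    ∑ k, ∑ l, ((lam k : ℝ) * (lam l : ℝ)) * |a k - a l| ≤ 0 := by
  refine sum_sum_mul_abs_sub_nonpos_of_cut a _ fun u hu => ?_
  have hsq : ∀ k, u k ^ 2 = u k := fun k => by rcases hu k with h | h <;> simp [h]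
  obtain ⟨m, hm⟩ : ∃ m : ℤ, ∑ k, (lam k : ℝ) * u k = m := by
    classical
    refine ⟨∑ k with u k = 1, lam k, ?_⟩
    rw [Int.cast_sum, sum_filter]
    exact sum_congr rfl fun k _ => by rcases hu k with h | h <;> simp [h]
  have hsum' : ∑ k, (lam k : ℝ) = 1 := by exact_mod_cast hsum
  rw [sum_sum_mul_mul_sub_sq]
  simp only [hsq, hsum', hm]
  have hm_int : (0 : ℝ) ≤ m * (m - 1) := by exact_mod_cast Int.mul_sub_one_nonneg m
  nlinarith

end

theorem madogram_negativeType_and_hypermetric_general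
    {X : Type*} {Ω : Type*} [MeasurableSpace Ω] (P : Measure Ω)
    (Z : X → Ω → ℝ)
    (hint : ∀ x y : X, Integrable (fun ω => |Z x ω - Z y ω|) P)
    (γ1 : X × X → ℝ)
    (hγ1 : ∀ x y : X, γ1 (x, y) = (1 / 2) * ∫ ω, |Z x ω - Z y ω| ∂P)
    (n : ℕ) (x : Fin n → X) :
    (∀ lam : Fin n → ℝ, (∑ k, lam k) = 0 →
      ∑ k, ∑ l, lam k * lam l * γ1 (x k, x l) ≤ 0) ∧
    (∀ lam : Fin n → ℤ, (∑ k, lam k) = 1 →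
      ∑ k, ∑ l, ((lam k : ℝ) * (lam l : ℝ)) * γ1 (x k, x l) ≤ 0) := by
  have integrate : ∀ c : Fin n → Fin n → ℝ,
      (∀ ω, ∑ k, ∑ l, c k l * |Z (x k) ω - Z (x l) ω| ≤ 0) →
        ∑ k, ∑ l, c k l * γ1 (x k, x l) ≤ 0 := fun c hc => by
    have h := sum_sum_mul_integral_nonpos P c _ (fun k l => hint (x k) (x l)) hc
    simp_rw [hγ1, mul_left_comm (c _ _), ← mul_sum]
    exact mul_nonpos_of_nonneg_of_nonpos (by norm_num) h
  exact ⟨fun lam hsum => integrate _ fun ω =>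
      sum_sum_mul_abs_sub_nonpos_of_sum_eq_zero (fun k => Z (x k) ω) lam hsum,
    fun lam hsum => integrate _ fun ω =>
      sum_sum_mul_abs_sub_nonpos_of_sum_eq_one (fun k => Z (x k) ω) lam hsum⟩

/-- Any madogram `γ1(x,y) = (1/2)·E[|Z x − Z y|]` satisfies the negative-type
inequalities and the hypermetric inequalities. -/
theorem madogram_negativeType_and_hypermetric
    {X : Type*} {Ω : Type*} [MeasurableSpace Ω] (P : Measure Ω)
    [IsProbabilityMeasure P] (Z : X → Ω → ℝ)
    (hmeas : ∀ x, Measurable (Z x))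
    (hint : ∀ x y : X, Integrable (fun ω => |Z x ω - Z y ω|) P)
    (γ1 : X × X → ℝ)
    (hγ1 : ∀ x y : X, γ1 (x, y) = (1 / 2) * ∫ ω, |Z x ω - Z y ω| ∂P)
    (n : ℕ) (hn : 0 < n) (x : Fin n → X) :
    (∀ lam : Fin n → ℝ, (∑ k, lam k) = 0 →
      ∑ k, ∑ l, lam k * lam l * γ1 (x k, x l) ≤ 0) ∧
    (∀ lam : Fin n → ℤ, (∑ k, lam k) = 1 →
      ∑ k, ∑ l, ((lam k : ℝ) * (lam l : ℝ)) * γ1 (x k, x l) ≤ 0) :=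
  madogram_negativeType_and_hypermetric_general P Z hint γ1 hγ1 n x
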